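/- Let A be an admissible pseudo-Hermitian n×n matrix with eigenvalues λ_p ≥ … ≥ λ_1 > μ_1 ≥ … ≥ μ_q, and fix integers 1 ≤ i_1 < i_2 < … < i_m ≤ p. For every flag V_{i_1} ⊂ V_{i_2} ⊂ … ⊂ V_{i_m} of subspaces of ℂⁿ with dim V_{i_j} = i_j and V_{i_m}∖{0} ⊆ ℂⁿ₊, there exists a system x_1, …, x_m subordinate to the flag such that Σ_{j=1}^m x_j†·A·x_j ≥ Σ_{j=1}^m λ_{i_j}. -/

import Mathlib

open Matrix

/-- The signature matrix `J = diag(1,…,1,−1,…,−1)` with `p` ones and `q` minus-ones. -/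
noncomputable def Jmat (p q : ℕ) : Matrix (Fin (p + q)) (Fin (p + q)) ℂ :=
  Matrix.diagonal (fun i => if (i : ℕ) < p then 1 else -1)

/-- The indefinite pairing `⟨z,w⟩ = Σ_{i<p} z_i conj(w_i) − Σ_{i≥p} z_i conj(w_i)`;
equivalently `w† · z` where `x† = (J conj(x))ᵀ`. -/
noncomputable def pairing (p q : ℕ) (z w : Fin (p + q) → ℂ) : ℂ :=
  ∑ i : Fin (p + q),
    (if (i : ℕ) < p then z i * (starRingEnd ℂ) (w i) else -(z i * (starRingEnd ℂ) (w i)))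

/-- The diagonal entries of `Λ = diag(λ_p, …, λ_1, μ_1, …, μ_q)`, where `lam` and `mu`
are 0-indexed: `lam i = λ_{i+1}` and `mu j = μ_{j+1}`. -/
noncomputable def diagEntries (p q : ℕ) (lam : Fin p → ℝ) (mu : Fin q → ℝ) :
    Fin (p + q) → ℂ :=
  fun i =>
    if h : (i : ℕ) < p then ((lam ⟨p - 1 - (i : ℕ), by omega⟩ : ℝ) : ℂ)
    else ((mu ⟨(i : ℕ) - p, by have := i.isLt; omega⟩ : ℝ) : ℂ)

/-- `A` is an admissible pseudo-Hermitian matrix with (real) eigenvalues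
`λ_p ≥ … ≥ λ_1 > μ_1 ≥ … ≥ μ_q`, recorded 0-indexed as `lam i = λ_{i+1}` (so `lam` is
monotone) and `mu j = μ_{j+1}` (so `mu` is antitone), with `λ_1 > μ_1`, and
`A = U Λ U⁻¹` for some invertible `U` with `U J Uᴴ = J`. -/
def IsAdmissible (p q : ℕ) (hp : 0 < p) (hq : 0 < q)
    (A : Matrix (Fin (p + q)) (Fin (p + q)) ℂ)
    (lam : Fin p → ℝ) (mu : Fin q → ℝ) : Prop :=
  A * Jmat p q = Jmat p q * A.conjTranspose ∧
  Monotone lam ∧ Antitone mu ∧ mu ⟨0, hq⟩ < lam ⟨0, hp⟩ ∧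
  ∃ U : Matrix (Fin (p + q)) (Fin (p + q)) ℂ,
    IsUnit U ∧ U * Jmat p q * U.conjTranspose = Jmat p q ∧
    A = U * Matrix.diagonal (diagEntries p q lam mu) * U⁻¹

/-- The Rayleigh ratio `R_A(x) = (x† A x)/(x† x)`, as a real number (for admissible
pseudo-Hermitian `A` both `x† A x` and `x† x` are real). -/
noncomputable def rayleigh (p q : ℕ) (A : Matrix (Fin (p + q)) (Fin (p + q)) ℂ)
    (x : Fin (p + q) → ℂ) : ℝ :=
  (pairing p q (A.mulVec x) x).re / (pairing p q x x).re

/-- A flag `V_{i_1} ⊂ V_{i_2} ⊂ ⋯ ⊂ V_{i_m}` of complex subspaces of `ℂⁿ` with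
`dim V_{i_j} = i_j` (here `idx : Fin m → Fin p` is 0-indexed, so `i_j = idx j + 1`)
and `V_{i_m} ∖ {0} ⊆ ℂⁿ₊`. -/
def IsFlag (p q m : ℕ) (hm : 0 < m) (idx : Fin m → Fin p)
    (V : Fin m → Submodule ℂ (Fin (p + q) → ℂ)) : Prop :=
  (∀ j k : Fin m, j < k → V j < V k) ∧
  (∀ j, Module.finrank ℂ (V j) = (idx j : ℕ) + 1) ∧
  (∀ x ∈ V ⟨m - 1, by omega⟩, x ≠ 0 → 0 < (pairing p q x x).re)

/-- A system of vectors `x_1, …, x_m` subordinate to the flag `V`: `x_j ∈ V_{i_j}`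
and `⟨x_j, x_k⟩ = δ_{jk}`. -/
def IsSubordinate (p q m : ℕ) (V : Fin m → Submodule ℂ (Fin (p + q) → ℂ))
    (x : Fin m → Fin (p + q) → ℂ) : Prop :=
  (∀ j, x j ∈ V j) ∧ ∀ j k, pairing p q (x j) (x k) = if j = k then 1 else 0

/-!
Write `A = U Λ U⁻¹` with `U` preserving the pairing. For `t ≤ p` the subspace
`G_t = U · span {e_i : i ∉ [p - t, p)}` has codimension `t`, and since `μ_1 < λ_1` every
`x ∈ G_t` with `⟨x, x⟩ = 1` satisfies `x† A x ≥ λ_{t+1}`. A greedy dimension count yields an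
`m`-dimensional `T ⊆ V_{i_m}` meeting each `V_{i_j}` in dimension `≥ j` and each `G_{i_k - 1}` in
dimension `≥ m - k + 1`. The pairing is positive definite on `T`, so Gram–Schmidt gives an
orthonormal basis `x` of `T` adapted to the flag and another one, `w`, adapted to the `G`'s.
The sum `Σ ⟨A y_j, y_j⟩` over an orthonormal basis `y` of `T` does not depend on the basis,
hence `Σ x_j† A x_j = Σ w_k† A w_k ≥ Σ λ_{i_k}`.
-/

namespace LinearMap

variable {ι κ E : Type*} [AddCommGroup E] [Module ℂ E] {B : E →ₗ⋆[ℂ] E →ₗ[ℂ] ℂ}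

def IsOrthonormal [DecidableEq ι] (B : E →ₗ⋆[ℂ] E →ₗ[ℂ] ℂ) (x : ι → E) : Prop :=
  ∀ i j, B (x i) (x j) = if i = j then 1 else 0

def IsPosDefOn (B : E →ₗ⋆[ℂ] E →ₗ[ℂ] ℂ) (W : Submodule ℂ E) : Prop :=
  ∀ x ∈ W, x ≠ 0 → 0 < (B x x).re

lemma IsSymm.apply_self_eq_re (hB : B.IsSymm) (x : E) : B x x = (B x x).re :=
  (Complex.conj_eq_iff_re.mp (hB.eq x x)).symm

lemma IsPosDefOn.mono {W W' : Submodule ℂ E} (hW : B.IsPosDefOn W) (h : W' ≤ W) :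
    B.IsPosDefOn W' :=
  fun x hx => hW x (h hx)

namespace IsOrthonormal

variable [Fintype ι] [DecidableEq ι] {x : ι → E}

lemma apply_sum_smul (hx : B.IsOrthonormal x) (c : ι → ℂ) (j : ι) :
    B (x j) (∑ i, c i • x i) = c j := by
  simp [map_sum, hx j]

lemma linearIndependent (hx : B.IsOrthonormal x) : LinearIndependent ℂ x :=
  Fintype.linearIndependent_iff.mpr fun c hc j => by
    simpa [hc] using (hx.apply_sum_smul c j).symm

lemma eq_sum_of_mem_span (hx : B.IsOrthonormal x) {w : E}
    (hw : w ∈ Submodule.span ℂ (Set.range x)) : w = ∑ j, B (x j) w • x j := by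
  obtain ⟨c, rfl⟩ := (Submodule.mem_span_range_iff_exists_fun ℂ).mp hw
  simp only [hx.apply_sum_smul]

lemma span_eq [FiniteDimensional ℂ E] (hx : B.IsOrthonormal x) {T : Submodule ℂ E}
    (hxT : ∀ i, x i ∈ T) (hT : Module.finrank ℂ T = Fintype.card ι) :
    Submodule.span ℂ (Set.range x) = T :=
  Submodule.eq_of_le_of_finrank_le (Submodule.span_le.mpr (Set.range_subset_iff.mpr hxT))
    (by rw [hT, finrank_span_eq_card hx.linearIndependent])

/-- Expand the second argument in the basis `x`, then the first one in the basis `w`. -/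
lemma sum_apply_self_eq [Fintype κ] [DecidableEq κ] (hB : B.IsSymm)
    (C : E →ₗ⋆[ℂ] E →ₗ[ℂ] ℂ) (hx : B.IsOrthonormal x) {w : κ → E} (hw : B.IsOrthonormal w)
    (hspan : Submodule.span ℂ (Set.range x) = Submodule.span ℂ (Set.range w)) :
    ∑ k, C (w k) (w k) = ∑ j, C (x j) (x j) := by
  have hwx : ∀ k, w k ∈ Submodule.span ℂ (Set.range x) :=
    fun k => hspan ▸ Submodule.subset_span ⟨k, rfl⟩
  have hxw : ∀ j, x j ∈ Submodule.span ℂ (Set.range w) :=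
    fun j => hspan ▸ Submodule.subset_span ⟨j, rfl⟩
  calc ∑ k, C (w k) (w k) = ∑ k, ∑ j, B (x j) (w k) * C (w k) (x j) := by
        refine Finset.sum_congr rfl fun k _ => ?_
        conv_lhs => arg 2; rw [hx.eq_sum_of_mem_span (hwx k)]
        simp [map_sum]
    _ = ∑ j, C (∑ k, B (w k) (x j) • w k) (x j) := by
        rw [Finset.sum_comm]
        refine Finset.sum_congr rfl fun j _ => ?_
        simp [map_sum, hB.eq]
    _ = ∑ j, C (x j) (x j) := by
        simp only [← hw.eq_sum_of_mem_span (hxw _)]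

end IsOrthonormal

lemma IsPosDefOn.exists_unit_orthogonal [Fintype ι] (hB : B.IsSymm) {W : Submodule ℂ E}
    (hW : B.IsPosDefOn W) (z : ι → E) (hcard : Fintype.card ι < Module.finrank ℂ W) :
    ∃ y ∈ W, B y y = 1 ∧ ∀ i, B (z i) y = 0 := by
  let L : W →ₗ[ℂ] ι → ℂ := LinearMap.pi fun i => (B (z i)).comp W.subtype
  have : FiniteDimensional ℂ W := Module.finite_of_finrank_pos (by omega)
  obtain ⟨v, hvL, hv0⟩ : ∃ v ∈ LinearMap.ker L, v ≠ 0 := by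
    refine Submodule.exists_mem_ne_zero_of_ne_bot fun hker => ?_
    have := LinearMap.finrank_le_finrank_of_injective (LinearMap.ker_eq_bot.mp hker)
    rw [Module.finrank_fintype_fun_eq_card] at this
    omega
  have hvz : ∀ i, B (z i) v = 0 := fun i => congrFun hvL i
  have hpos : 0 < (B v v).re := hW v v.2 (by simpa using hv0)
  set a : ℝ := (Real.sqrt (B v v).re)⁻¹
  refine ⟨(a : ℂ) • (v : E), W.smul_mem _ v.2, ?_, fun i => by simp [hvz i]⟩
  have ha : a * a * (B v v).re = 1 := by
    rw [← mul_inv, ← sq, Real.sq_sqrt hpos.le, inv_mul_cancel₀ hpos.ne']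
  simp only [map_smul, LinearMap.map_smulₛₗ₂, smul_eq_mul, Complex.conj_ofReal]
  rw [hB.apply_self_eq_re, ← mul_assoc]
  exact_mod_cast ha

lemma IsSymm.exists_isOrthonormal_mem {m : ℕ} (hB : B.IsSymm) (P : Fin m → Submodule ℂ E)
    (hPpos : ∀ k, B.IsPosDefOn (P k)) (hP : ∀ k : Fin m, (k : ℕ) + 1 ≤ Module.finrank ℂ (P k)) :
    ∃ x : Fin m → E, B.IsOrthonormal x ∧ ∀ k, x k ∈ P k := by
  induction m with
  | zero => exact ⟨finZeroElim, finZeroElim, finZeroElim⟩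
  | succ m ih =>
    obtain ⟨x, hx, hxP⟩ := ih (fun k => P k.castSucc) (fun k => hPpos _)
      (fun k => by simpa using hP k.castSucc)
    obtain ⟨y, hyP, hyy, hxy⟩ := (hPpos (Fin.last m)).exists_unit_orthogonal hB x
      (by simpa using hP (Fin.last m))
    have hyx : ∀ k, B y (x k) = 0 := fun k => hB.eq_iff.mp (hxy k)
    refine ⟨Fin.snoc x y, fun j k => ?_, Fin.lastCases (by simpa using hyP) (by simpa using hxP)⟩
    induction j using Fin.lastCases <;> induction k using Fin.lastCases <;>
      simp [hx _ _, hyy, hxy, hyx, Fin.castSucc_ne_last, (Fin.castSucc_ne_last _).symm]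

end LinearMap

lemma StrictMono.val_sub_val_le {m p : ℕ} {f : Fin m → Fin p} (hf : StrictMono f) (j k : Fin m) :
    (j : ℕ) - k ≤ (f j : ℕ) - f k := by
  have := Finset.card_le_card_of_injOn f
    (fun i hi => by
      simp only [Finset.coe_Icc, Set.mem_Icc] at hi ⊢
      exact ⟨hf.monotone hi.1, hf.monotone hi.2⟩)
    hf.injective.injOn (s := Finset.Icc k j) (t := Finset.Icc (f k) (f j))
  simp only [Fin.card_Icc] at this
  omega

section Greedy

open Module Finset

variable {K E : Type*} [Field K] [AddCommGroup E] [Module K E]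
  {m : ℕ} {V G : Fin m → Submodule K E}

lemma Antitone.exists_mem_notMem_forall_mem_or_inf_le (hG : Antitone G) {W S : Submodule K E}
    {k₀ : Fin m} (hk₀ : ¬ W ⊓ G k₀ ≤ S) :
    ∃ y ∈ W, y ∉ S ∧ ∀ k, y ∈ G k ∨ W ⊓ G k ≤ S := by
  classical
  obtain ⟨κ, hκ, hκmax⟩ := (univ.filter fun k => ¬ W ⊓ G k ≤ S).exists_max_image id
    ⟨k₀, mem_filter.mpr ⟨mem_univ _, hk₀⟩⟩
  obtain ⟨y, hy, hyS⟩ := SetLike.not_le_iff_exists.mp (mem_filter.mp hκ).2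
  refine ⟨y, hy.1, hyS, fun k => ?_⟩
  rcases le_or_gt k κ with hkκ | hκk
  · exact Or.inl (hG hkκ hy.2)
  · right
    by_contra h
    exact (hκmax k (mem_filter.mpr ⟨mem_univ _, h⟩)).not_gt hκk

variable [FiniteDimensional K E]

lemma Submodule.le_of_finrank_le_finrank_inf {S W : Submodule K E}
    (h : finrank K S ≤ finrank K (S ⊓ W : Submodule K E)) : S ≤ W :=
  inf_eq_left.mp (Submodule.eq_of_le_of_finrank_le inf_le_left h)

lemma Submodule.finrank_add_finrank_le_finrank_add_finrank_inf (S W : Submodule K E) :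
    finrank K S + finrank K W ≤ finrank K E + finrank K (S ⊓ W : Submodule K E) := by
  have := Submodule.finrank_sup_add_finrank_inf_eq S W
  have := (S ⊔ W).finrank_le
  omega

variable (V G) in
def IsGreedyStage (j : ℕ) (S : Submodule K E) : Prop :=
  finrank K S = j ∧ (∀ t : Fin m, min j (t + 1) ≤ finrank K (S ⊓ V t : Submodule K E)) ∧
    ∀ k : Fin m, j - k ≤ finrank K (S ⊓ G k : Submodule K E)

/-- Add to `S` a vector of `V j ⊓ G κ` outside `S`, with `κ` as large as possible. -/
lemma IsGreedyStage.exists_succ (hV : Monotone V) (hG : Antitone G)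
    (hVG : ∀ k j : Fin m, k ≤ j → (j : ℕ) - k + 1 ≤ finrank K (V j ⊓ G k : Submodule K E))
    {j : ℕ} (hj : j < m) {S : Submodule K E} (hS : IsGreedyStage V G j S) :
    ∃ S', IsGreedyStage V G (j + 1) S' := by
  obtain ⟨hSj, hSV, hSG⟩ := hS
  obtain ⟨J, rfl⟩ : ∃ J : Fin m, (J : ℕ) = j := ⟨⟨j, hj⟩, rfl⟩
  have h0 : ¬ V J ⊓ G ⟨0, J.pos⟩ ≤ S := fun h => by
    have := Submodule.finrank_mono h
    have : (J : ℕ) - 0 + 1 ≤ _ := hVG ⟨0, J.pos⟩ J (Nat.zero_le _)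
    omega
  obtain ⟨y, hyV, hyS, hyG⟩ := hG.exists_mem_notMem_forall_mem_or_inf_le h0
  have hyS' : y ∈ S ⊔ Submodule.span K {y} :=
    Submodule.mem_sup_right (Submodule.mem_span_singleton_self y)
  have hS'rank : finrank K (S ⊔ Submodule.span K {y} : Submodule K E) = J + 1 := by
    rw [Submodule.finrank_sup_span_singleton hyS, hSj]
  refine ⟨S ⊔ Submodule.span K {y}, hS'rank, fun t => ?_, fun k => ?_⟩
  · rcases lt_or_ge t J with htJ | hJt
    · calc min ((J : ℕ) + 1) ((t : ℕ) + 1) ≤ min (J : ℕ) ((t : ℕ) + 1) := by omega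
        _ ≤ _ := hSV t
        _ ≤ _ := Submodule.finrank_mono (inf_le_inf_right _ le_sup_left)
    · have hSt : S ≤ V t := Submodule.le_of_finrank_le_finrank_inf (by have := hSV t; omega)
      rw [inf_eq_left.mpr (sup_le hSt ((Submodule.span_singleton_le_iff_mem _ _).mpr (hV hJt hyV))),
        hS'rank]
      omega
  · rcases hyG k with hyk | hVGk
    · have hlt : S ⊓ G k < (S ⊔ Submodule.span K {y}) ⊓ G k :=
        SetLike.lt_iff_le_and_exists.mpr ⟨inf_le_inf_right _ le_sup_left, y,
          Submodule.mem_inf.mpr ⟨hyS', hyk⟩,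
          fun h => hyS (Submodule.mem_inf.mp h).1⟩
      have := Submodule.finrank_lt_finrank_of_lt hlt
      have := hSG k
      omega
    · rcases le_or_gt k J with hkJ | hJk
      · have : finrank K (V J ⊓ G k : Submodule K E) ≤
            finrank K ((S ⊔ Submodule.span K {y}) ⊓ G k : Submodule K E) :=
          Submodule.finrank_mono ((le_inf hVGk inf_le_right).trans (inf_le_inf_right _ le_sup_left))
        have := hVG k J hkJ
        omega
      · omega

theorem exists_submodule_finrank_inf_ge (hV : Monotone V) (hG : Antitone G)
    (hVG : ∀ k j : Fin m, k ≤ j → (j : ℕ) - k + 1 ≤ finrank K (V j ⊓ G k : Submodule K E)) :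
    ∃ T : Submodule K E, finrank K T = m ∧
      (∀ t : Fin m, (t : ℕ) + 1 ≤ finrank K (T ⊓ V t : Submodule K E)) ∧
      ∀ k : Fin m, m - k ≤ finrank K (T ⊓ G k : Submodule K E) := by
  have : ∀ j ≤ m, ∃ S, IsGreedyStage V G j S := by
    intro j hj
    induction j with
    | zero => exact ⟨⊥, finrank_bot K E, by simp, by simp⟩
    | succ j ih =>
      obtain ⟨S, hS⟩ := ih (by omega)
      exact hS.exists_succ hV hG hVG (by omega)
  obtain ⟨T, hT, hTV, hTG⟩ := this m le_rfl
  exact ⟨T, hT, fun t => by simpa [t.isLt.le] using hTV t, hTG⟩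

lemma finrank_inf_ge_of_strictMono {p : ℕ} {idx : Fin m → Fin p} (hidx : StrictMono idx)
    {V : Fin m → Submodule K E} {G : Fin p → Submodule K E}
    (hV : ∀ j, finrank K (V j) = (idx j : ℕ) + 1) (hG : ∀ t, finrank K E - t ≤ finrank K (G t))
    (hp : p ≤ finrank K E) (k j : Fin m) (hkj : k ≤ j) :
    (j : ℕ) - k + 1 ≤ finrank K (V j ⊓ G (idx k) : Submodule K E) := by
  have := (V j).finrank_add_finrank_le_finrank_add_finrank_inf (G (idx k))
  have := hidx.val_sub_val_le j k
  have : idx k ≤ idx j := hidx.monotone hkj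
  have := hV j
  have := hG (idx k)
  omega

end Greedy

/-- The pairing as a sesquilinear form in Mathlib's convention (conjugate-linear in the first
argument), hence with its arguments swapped. -/
noncomputable def pairingForm (p q : ℕ) :
    (Fin (p + q) → ℂ) →ₗ⋆[ℂ] (Fin (p + q) → ℂ) →ₗ[ℂ] ℂ :=
  LinearMap.mk₂'ₛₗ (starRingEnd ℂ) (RingHom.id ℂ) (fun w z => pairing p q z w)
    (fun _ _ _ => by
      simp only [pairing, ← Finset.sum_add_distrib]; congr! 1; split_ifs <;> simp <;> ring)
    (fun _ _ _ => by
      simp only [pairing, smul_eq_mul, Finset.mul_sum]; congr! 1; split_ifs <;> simp <;> ring)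
    (fun _ _ _ => by
      simp only [pairing, ← Finset.sum_add_distrib]; congr! 1; split_ifs <;> simp <;> ring)
    (fun _ _ _ => by
      simp only [pairing, smul_eq_mul, Finset.mul_sum]; congr! 1; split_ifs <;> simp <;> ring)

lemma pairingForm_apply (p q : ℕ) (w z : Fin (p + q) → ℂ) :
    pairingForm p q w z = pairing p q z w :=
  rfl

lemma pairingForm_isSymm (p q : ℕ) : (pairingForm p q).IsSymm :=
  LinearMap.isSymm_def.mpr fun w z => by
    simp only [pairingForm_apply, pairing, map_sum]
    congr! 1; split_ifs <;> simp [mul_comm]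

lemma pairing_eq_dotProduct (p q : ℕ) (z w : Fin (p + q) → ℂ) :
    pairing p q z w = star w ⬝ᵥ (Jmat p q *ᵥ z) := by
  simp only [pairing, Jmat, dotProduct, mulVec_diagonal]
  congr! 1; split_ifs <;> simp <;> ring

lemma Jmat_mul_self (p q : ℕ) : Jmat p q * Jmat p q = 1 := by
  simp only [Jmat, diagonal_mul_diagonal, ← diagonal_one]
  congr! 2; split_ifs <;> simp

lemma conjTranspose_mul_Jmat_mul {p q : ℕ} {U : Matrix (Fin (p + q)) (Fin (p + q)) ℂ}
    (hUJ : U * Jmat p q * Uᴴ = Jmat p q) : Uᴴ * Jmat p q * U = Jmat p q := by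
  have : U * (Jmat p q * Uᴴ * Jmat p q) = 1 := by
    rw [← Matrix.mul_assoc, ← Matrix.mul_assoc, hUJ, Jmat_mul_self]
  have := congrArg (Jmat p q * ·) (mul_eq_one_comm.mp this)
  simpa [Matrix.mul_assoc, ← Matrix.mul_assoc (Jmat p q) (Jmat p q), Jmat_mul_self] using this

lemma pairing_mulVec_mulVec {p q : ℕ} {U : Matrix (Fin (p + q)) (Fin (p + q)) ℂ}
    (hUJ : U * Jmat p q * Uᴴ = Jmat p q) (z w : Fin (p + q) → ℂ) :
    pairing p q (U *ᵥ z) (U *ᵥ w) = pairing p q z w := by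
  rw [pairing_eq_dotProduct, pairing_eq_dotProduct, star_mulVec, mulVec_mulVec,
    dotProduct_mulVec, vecMul_vecMul, ← Matrix.mul_assoc, conjTranspose_mul_Jmat_mul hUJ,
    ← dotProduct_mulVec]

/-- The coordinates `p - t, …, p - 1` are those carrying `λ_t, …, λ_1` in `Λ`. -/
noncomputable def coordSubspace (p q : ℕ) (t : Fin p) : Submodule ℂ (Fin (p + q) → ℂ) :=
  LinearMap.ker (LinearMap.funLeft ℂ ℂ fun j : Fin t =>
    (⟨p - t + j, by have := j.isLt; have := t.isLt; omega⟩ : Fin (p + q)))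

lemma coordSubspace_antitone (p q : ℕ) : Antitone (coordSubspace p q) := by
  intro t t' htt' c hc
  have htt'' := Fin.le_def.mp htt'
  funext j
  have h := congrFun hc ⟨t' - t + j, by omega⟩
  simp only [LinearMap.funLeft_apply, Pi.zero_apply] at h ⊢
  rw [← h]
  congr 1
  ext
  simp only
  omega

lemma finrank_coordSubspace_ge (p q : ℕ) (t : Fin p) :
    p + q - t ≤ Module.finrank ℂ (coordSubspace p q t) := by
  have hrank := LinearMap.finrank_range_add_finrank_ker (LinearMap.funLeft ℂ ℂ fun j : Fin t =>
    (⟨p - t + j, by have := j.isLt; have := t.isLt; omega⟩ : Fin (p + q)))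
  have := (LinearMap.range (LinearMap.funLeft ℂ ℂ fun j : Fin t =>
    (⟨p - t + j, by have := j.isLt; have := t.isLt; omega⟩ : Fin (p + q)))).finrank_le
  simp only [Module.finrank_fin_fun] at hrank this
  rw [coordSubspace]
  omega

lemma mul_re_pairing_le_of_mem_coordSubspace {p q : ℕ} (hp : 0 < p) (hq : 0 < q)
    {lam : Fin p → ℝ} {mu : Fin q → ℝ} (hlam : Monotone lam) (hmu : Antitone mu)
    (hlm : mu ⟨0, hq⟩ ≤ lam ⟨0, hp⟩) (t : Fin p) {c : Fin (p + q) → ℂ}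
    (hc : c ∈ coordSubspace p q t) :
    lam t * (pairing p q c c).re ≤ (pairing p q (diagonal (diagEntries p q lam mu) *ᵥ c) c).re := by
  simp only [pairing, Complex.re_sum, Finset.mul_sum, mulVec_diagonal]
  refine Finset.sum_le_sum fun i _ => ?_
  by_cases hi : (i : ℕ) < p
  · have hci : c i = 0 ∨ lam t ≤ lam ⟨p - 1 - i, by omega⟩ := by
      by_cases hit : (i : ℕ) < p - t
      · exact Or.inr (hlam (Fin.mk_le_mk.mpr (by omega)))
      · left
        have := congrFun hc ⟨i - (p - t), by omega⟩
        simp only [LinearMap.funLeft_apply, Pi.zero_apply] at this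
        rwa [show (⟨p - t + (i - (p - t)), _⟩ : Fin (p + q)) = i from Fin.ext (by simp; omega)]
          at this
    simp only [diagEntries, hi, ↓reduceIte, ↓reduceDIte, mul_assoc, Complex.mul_conj]
    rw [← Complex.ofReal_mul, Complex.ofReal_re, Complex.ofReal_re]
    rcases hci with h | h
    · simp [h]
    · exact mul_le_mul_of_nonneg_right h (Complex.normSq_nonneg _)
  · have hmut : mu ⟨i - p, by omega⟩ ≤ lam t :=
      ((hmu (Fin.mk_le_mk.mpr (Nat.zero_le _))).trans hlm).trans
        (hlam (Fin.mk_le_mk.mpr (Nat.zero_le _)))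
    simp only [diagEntries, hi, ↓reduceIte, ↓reduceDIte, mul_assoc, Complex.mul_conj]
    rw [← Complex.ofReal_mul, Complex.neg_re, Complex.neg_re, Complex.ofReal_re,
      Complex.ofReal_re]
    nlinarith [Complex.normSq_nonneg (c i)]

lemma IsAdmissible.exists_spectralSubspaces {p q : ℕ} {hp : 0 < p} {hq : 0 < q}
    {A : Matrix (Fin (p + q)) (Fin (p + q)) ℂ} {lam : Fin p → ℝ} {mu : Fin q → ℝ}
    (hA : IsAdmissible p q hp hq A lam mu) :
    ∃ G : Fin p → Submodule ℂ (Fin (p + q) → ℂ), Antitone G ∧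
      (∀ t, p + q - t ≤ Module.finrank ℂ (G t)) ∧
      ∀ t, ∀ z ∈ G t, pairing p q z z = 1 → lam t ≤ (pairing p q (A *ᵥ z) z).re := by
  obtain ⟨-, hlam, hmu, hlm, U, hU, hUJ, rfl⟩ := hA
  let e := U.toLinearEquiv' hU.invertible
  refine ⟨fun t => (coordSubspace p q t).map e.toLinearMap,
    fun t t' h => Submodule.map_mono (coordSubspace_antitone p q h), fun t => ?_, ?_⟩
  · rw [e.finrank_map_eq]
    exact finrank_coordSubspace_ge p q t
  rintro t _ ⟨c, hc, rfl⟩ hz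
  have he : e.toLinearMap c = U *ᵥ c := rfl
  have hAU : (U * diagonal (diagEntries p q lam mu) * U⁻¹) *ᵥ (U *ᵥ c) =
      U *ᵥ (diagonal (diagEntries p q lam mu) *ᵥ c) := by
    rw [mulVec_mulVec, Matrix.mul_assoc, Matrix.nonsing_inv_mul _ ((isUnit_iff_isUnit_det U).mp hU),
      Matrix.mul_one, mulVec_mulVec]
  rw [he, pairing_mulVec_mulVec hUJ] at hz
  rw [he, hAU, pairing_mulVec_mulVec hUJ]
  simpa [hz] using mul_re_pairing_le_of_mem_coordSubspace hp hq hlam hmu hlm.le t hc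

/-- for every flag `V_{i_1} ⊂ ⋯ ⊂ V_{i_m}` (with `dim V_{i_j} = i_j`
and `V_{i_m}∖{0} ⊆ ℂⁿ₊`) there is a subordinate system `x_1, …, x_m` with
`Σ_j x_j† A x_j ≥ Σ_j λ_{i_j}`. -/
theorem exists_subordinate_system_with_large_sum
    (p q : ℕ) (hp : 0 < p) (hq : 0 < q)
    (A : Matrix (Fin (p + q)) (Fin (p + q)) ℂ)
    (lam : Fin p → ℝ) (mu : Fin q → ℝ)
    (hA : IsAdmissible p q hp hq A lam mu)
    (m : ℕ) (hm : 0 < m) (idx : Fin m → Fin p) (hidx : StrictMono idx)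
    (V : Fin m → Submodule ℂ (Fin (p + q) → ℂ)) (hV : IsFlag p q m hm idx V) :
    ∃ x : Fin m → Fin (p + q) → ℂ, IsSubordinate p q m V x ∧
      ∑ j : Fin m, lam (idx j) ≤
        ∑ j : Fin m, (pairing p q (A.mulVec (x j)) (x j)).re := by
  obtain ⟨G, hG, hGrank, hGA⟩ := hA.exists_spectralSubspaces
  obtain ⟨hVlt, hVrank, hVpos⟩ := hV
  obtain ⟨T, hT, hTV, hTG⟩ := exists_submodule_finrank_inf_ge
    (StrictMono.monotone fun j k => hVlt j k) (hG.comp_monotone hidx.monotone)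
    (finrank_inf_ge_of_strictMono hidx hVrank (by simpa using hGrank) (by simp))
  have hTtop : T ≤ V ⟨m - 1, by omega⟩ := Submodule.le_of_finrank_le_finrank_inf (by
    have := hTV ⟨m - 1, by omega⟩
    simp only at this
    omega)
  have hTpos : (pairingForm p q).IsPosDefOn T := fun z hz => hVpos z (hTtop hz)
  obtain ⟨x, hx, hxV⟩ := (pairingForm_isSymm p q).exists_isOrthonormal_mem
    (fun j => T ⊓ V j) (fun _ => hTpos.mono inf_le_left) hTV
  obtain ⟨w, hw, hwG⟩ := (pairingForm_isSymm p q).exists_isOrthonormal_mem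
    (fun k => T ⊓ G (idx k.rev)) (fun _ => hTpos.mono inf_le_left)
    (fun k => by have := hTG k.rev; simp only [Function.comp_apply, Fin.val_rev] at this; omega)
  refine ⟨x, ⟨fun j => (hxV j).2, fun j k => (hx k j).trans (if_congr eq_comm rfl rfl)⟩, ?_⟩
  calc ∑ j, lam (idx j) = ∑ k, lam (idx k.rev) := (Equiv.sum_comp Fin.revPerm _).symm
    _ ≤ ∑ k, (pairing p q (A *ᵥ w k) (w k)).re :=
      Finset.sum_le_sum fun k _ => hGA _ _ (hwG k).2 ((hw k k).trans (if_pos rfl))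
    _ = ∑ j, (pairing p q (A *ᵥ x j) (x j)).re := by
      simp only [← Complex.re_sum]
      congr 1
      refine hx.sum_apply_self_eq (pairingForm_isSymm p q)
        ((pairingForm p q).compl₂ (Matrix.toLin' A)) hw ?_
      rw [hx.span_eq (fun j => (hxV j).1) (by simpa using hT),
        hw.span_eq (fun k => (hwG k).1) (by simpa using hT)]
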